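/- Let F(z) = ∑_{n=0}^∞ a_n z^n be an entire function with L := limsup_{n→∞} √n·|a_n|^{1/n} < ∞. Define F(z;τ) := (e^{−τD²/2}F)(z) for z ∈ ℂ and τ ∈ ℂ with |τ|·L² < e. Then F(z;τ) solves the backward heat equation: ∂F(z;τ)/∂τ = −(1/2)·∂²F(z;τ)/∂z² for every z ∈ ℂ and every τ with |τ|·L² < e. -/

import Mathlib

open Filter MeasureTheory Metric Set

noncomputable section

/-- The `n`-th Taylor coefficient `a_n = F^{(n)}(0)/n!` of an entire function `F`. -/
def taylorCoeff (F : ℂ → ℂ) (n : ℕ) : ℂ := iteratedDeriv n F 0 / n.factorial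

/-- The heat flow `e^{-τ D²/2}` applied to the monomial `z^n`:
`∑_{m=0}^{⌊n/2⌋} ((-1)^m n!/(m! 2^m (n-2m)!)) z^{n-2m} τ^m`. -/
def heatTerm (τ z : ℂ) (n : ℕ) : ℂ :=
  ∑ m ∈ Finset.range (n / 2 + 1),
    ((-1 : ℂ) ^ m * n.factorial / (m.factorial * 2 ^ m * (n - 2 * m).factorial)) *
      z ^ (n - 2 * m) * τ ^ m

/-- The heat flow `(e^{-τ D²/2} F)(z)`, defined via the double series applied to the Taylor
coefficients of `F`. -/
def heatFlow (F : ℂ → ℂ) (τ z : ℂ) : ℂ := ∑' n : ℕ, taylorCoeff F n * heatTerm τ z n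

/-- The sequence `√n · |a_n|^{1/n}` measuring the growth of the Taylor coefficients of `F`. -/
def coefGrowthSeq (F : ℂ → ℂ) (n : ℕ) : ℝ :=
  Real.sqrt n * ‖taylorCoeff F n‖ ^ ((n : ℝ)⁻¹)

/-- `L(F) = limsup_{n→∞} √n · |a_n|^{1/n}`. -/
def Lgrowth (F : ℂ → ℂ) : ℝ := Filter.limsup (coefGrowthSeq F) Filter.atTop


/-!
Each `heatTerm τ z n` is a polynomial solving `∂_τ u = -½ ∂_z² u` (a computation on its
coefficients), so it suffices to differentiate `∑ aₙ heatTerm τ z n` term by term. A Cauchy-type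
estimate gives `‖heatTerm τ z n‖ ≤ n! σ⁻ⁿ exp (‖z‖ σ + ‖τ‖ σ² / 2)` for all `σ > 0`. Taking
`σ² ≈ n / r`, Stirling's formula and `‖aₙ‖ ≤ (δ / √n)ⁿ` for some `δ > L(F)` with `r δ² < e`, the
terms are dominated by `√n qⁿ exp (c √n)` with `q² = r δ² / e < 1`, uniformly for `‖τ‖ < r` and
`z` in a ball. Weierstrass' theorem on locally uniform limits of holomorphic functions then
justifies differentiating once in `τ` and twice in `z`.
-/

open Finset

/-- The coefficient of `z ^ (n - 2 * m) * τ ^ m` in `heatTerm τ z n`. -/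
def heatCoeff (n m : ℕ) : ℂ :=
  (-1 : ℂ) ^ m * n.factorial / (m.factorial * 2 ^ m * (n - 2 * m).factorial)

theorem heatCoeff_succ_mul {n m : ℕ} (h : 2 * (m + 1) ≤ n) :
    heatCoeff n (m + 1) * (m + 1) =
      -(1 / 2) * (heatCoeff n m * ((n - 2 * m : ℕ) : ℂ) * ((n - 2 * m - 1 : ℕ) : ℂ)) := by
  obtain ⟨k, rfl⟩ := Nat.exists_eq_add_of_le' h
  have h1 : k + 2 * (m + 1) - 2 * (m + 1) = k := by omega
  have h2 : k + 2 * (m + 1) - 2 * m = k + 2 := by omega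
  have h3 : k + 2 - 1 = k + 1 := rfl
  have hk1 : (k : ℂ) + 1 ≠ 0 := by norm_cast
  have hk2 : (k : ℂ) + 1 + 1 ≠ 0 := by norm_cast
  simp only [heatCoeff, h1, h2, h3, Nat.factorial_succ m, Nat.factorial_succ (k + 1),
    Nat.factorial_succ k]
  push_cast
  field_simp
  ring

theorem hasDerivAt_heatTerm_time (z : ℂ) (n : ℕ) (τ : ℂ) :
    HasDerivAt (fun s => heatTerm s z n)
      (∑ m ∈ range (n / 2 + 1), heatCoeff n m * z ^ (n - 2 * m) * (m * τ ^ (m - 1))) τ :=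
  HasDerivAt.fun_sum fun m _ => (hasDerivAt_pow m τ).const_mul _

theorem hasDerivAt_heatTerm_space (τ : ℂ) (n : ℕ) (z : ℂ) :
    HasDerivAt (fun w => heatTerm τ w n)
      (∑ m ∈ range (n / 2 + 1), heatCoeff n m * ((n - 2 * m : ℕ) * z ^ (n - 2 * m - 1)) * τ ^ m)
      z :=
  HasDerivAt.fun_sum fun _ _ => ((hasDerivAt_pow _ z).const_mul _).mul_const _

theorem iteratedDeriv_two_heatTerm_space (τ : ℂ) (n : ℕ) (z : ℂ) :
    iteratedDeriv 2 (fun w => heatTerm τ w n) z =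
      ∑ m ∈ range (n / 2 + 1), heatCoeff n m * ((n - 2 * m : ℕ) * ((n - 2 * m - 1 : ℕ) *
        z ^ (n - 2 * m - 1 - 1))) * τ ^ m := by
  rw [iteratedDeriv_succ, iteratedDeriv_one,
    funext fun w => (hasDerivAt_heatTerm_space τ n w).deriv]
  exact (HasDerivAt.fun_sum fun m _ =>
    (((hasDerivAt_pow _ z).const_mul _).const_mul _).mul_const _).deriv

theorem differentiable_heatTerm_time (z : ℂ) (n : ℕ) :
    Differentiable ℂ fun s => heatTerm s z n :=
  fun τ => (hasDerivAt_heatTerm_time z n τ).differentiableAt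

theorem differentiable_heatTerm_space (τ : ℂ) (n : ℕ) :
    Differentiable ℂ fun w => heatTerm τ w n :=
  fun z => (hasDerivAt_heatTerm_space τ n z).differentiableAt

theorem deriv_heatTerm_time (τ z : ℂ) (n : ℕ) :
    deriv (fun s => heatTerm s z n) τ =
      -(1 / 2) * iteratedDeriv 2 (fun w => heatTerm τ w n) z := by
  rw [(hasDerivAt_heatTerm_time z n τ).deriv, iteratedDeriv_two_heatTerm_space,
    sum_range_succ', sum_range_succ, mul_add]
  have last : n - 2 * (n / 2) - 1 = 0 := by omega
  rw [last, Nat.cast_zero, zero_mul, mul_zero, zero_mul, add_zero]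
  simp only [zero_mul, mul_zero, add_zero, mul_sum]
  refine sum_congr rfl fun m hm => ?_
  have hm : 2 * (m + 1) ≤ n := by rw [Finset.mem_range] at hm; omega
  have e : n - 2 * (m + 1) = n - 2 * m - 1 - 1 := by omega
  rw [e, Nat.add_sub_cancel]
  push_cast
  linear_combination (z ^ (n - 2 * m - 1 - 1) * τ ^ m) * heatCoeff_succ_mul hm

theorem norm_heatCoeff (n m : ℕ) :
    ‖heatCoeff n m‖ = n.factorial / (m.factorial * 2 ^ m * (n - 2 * m).factorial) := by
  simp [heatCoeff]

/-- A Cauchy estimate in disguise: `heatTerm τ z n / n!` is the `t ^ n`-coefficient of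
`exp (z t - τ t² / 2)`, which is bounded by `exp (‖z‖ σ + ‖τ‖ σ² / 2)` on `‖t‖ = σ`. -/
theorem norm_heatTerm_le (τ z : ℂ) (n : ℕ) {σ : ℝ} (hσ : 0 < σ) :
    ‖heatTerm τ z n‖ ≤ n.factorial / σ ^ n * Real.exp (‖z‖ * σ + ‖τ‖ * σ ^ 2 / 2) := by
  have term_le : ∀ m ∈ range (n / 2 + 1), ‖heatCoeff n m * z ^ (n - 2 * m) * τ ^ m‖ ≤
      n.factorial / σ ^ n * Real.exp (‖z‖ * σ) * ((‖τ‖ * σ ^ 2 / 2) ^ m / m.factorial) := by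
    intro m hm
    obtain ⟨k, hk⟩ : ∃ k, n = k + 2 * m := ⟨n - 2 * m, by rw [Finset.mem_range] at hm; omega⟩
    have hz : (‖z‖ * σ) ^ k / k.factorial ≤ Real.exp (‖z‖ * σ) :=
      Real.pow_div_factorial_le_exp _ (by positivity) k
    calc ‖heatCoeff n m * z ^ (n - 2 * m) * τ ^ m‖
        = n.factorial / σ ^ n * ((‖z‖ * σ) ^ k / k.factorial) *
            ((‖τ‖ * σ ^ 2 / 2) ^ m / m.factorial) := by
          rw [norm_mul, norm_mul, norm_heatCoeff, norm_pow, norm_pow, hk, Nat.add_sub_cancel,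
            div_pow, mul_pow]
          field_simp
          ring
      _ ≤ _ := by gcongr
  calc ‖heatTerm τ z n‖
      ≤ ∑ m ∈ range (n / 2 + 1), ‖heatCoeff n m * z ^ (n - 2 * m) * τ ^ m‖ := norm_sum_le _ _
    _ ≤ n.factorial / σ ^ n * Real.exp (‖z‖ * σ) *
          ∑ m ∈ range (n / 2 + 1), (‖τ‖ * σ ^ 2 / 2) ^ m / m.factorial := by
      rw [mul_sum]; exact sum_le_sum term_le
    _ ≤ n.factorial / σ ^ n * Real.exp (‖z‖ * σ) * Real.exp (‖τ‖ * σ ^ 2 / 2) := by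
      gcongr; exact Real.sum_le_exp_of_nonneg (by positivity) _
    _ = _ := by rw [mul_assoc, ← Real.exp_add]

theorem factorial_le_exp_one_mul_sqrt_mul_pow {n : ℕ} (hn : n ≠ 0) :
    (n.factorial : ℝ) ≤ Real.exp 1 * √n * (n / Real.exp 1) ^ n := by
  have hle : Stirling.stirlingSeq n ≤ Real.exp 1 / √2 := by
    obtain ⟨k, rfl⟩ := Nat.exists_eq_succ_of_ne_zero hn
    rw [← Stirling.stirlingSeq_one]
    exact Stirling.stirlingSeq'_antitone (Nat.zero_le k)
  have hpos : 0 < √(2 * n) * (n / Real.exp 1) ^ n := by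
    have : (0 : ℝ) < n := by positivity
    positivity
  rw [Stirling.stirlingSeq, div_le_iff₀ hpos, Real.sqrt_mul zero_le_two] at hle
  calc (n.factorial : ℝ) ≤ Real.exp 1 / √2 * (√2 * √n * (n / Real.exp 1) ^ n) := hle
    _ = Real.exp 1 * √n * (n / Real.exp 1) ^ n := by field_simp

theorem summable_geometric_mul_exp_sqrt {q : ℝ} (hq₀ : 0 ≤ q) (hq₁ : q < 1) (c : ℝ) :
    Summable fun n : ℕ => q ^ n * Real.exp (c * √n) := by
  set ε := Real.log (2 / (1 + q))
  have hexp : Real.exp ε = 2 / (1 + q) := Real.exp_log (by positivity)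
  have hε : 0 < ε := Real.log_pos (by rw [lt_div_iff₀ (by positivity)]; linarith)
  have hratio : q * Real.exp ε < 1 := by
    rw [hexp, mul_div_assoc', div_lt_one (by positivity)]; linarith
  have hsqrt : ∀ n : ℕ, c * √n ≤ c ^ 2 / (4 * ε) + n * ε := fun n => by
    have hn := Real.sq_sqrt (Nat.cast_nonneg (α := ℝ) n)
    rw [div_add' _ _ _ (by positivity), le_div_iff₀ (by positivity)]
    nlinarith [sq_nonneg (2 * ε * √n - c), congrArg (4 * ε ^ 2 * ·) hn]
  refine ((summable_geometric_of_lt_one (by positivity) hratio).mul_left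
    (Real.exp (c ^ 2 / (4 * ε)))).of_nonneg_of_le (fun n => by positivity) fun n => ?_
  calc q ^ n * Real.exp (c * √n) ≤ q ^ n * (Real.exp (c ^ 2 / (4 * ε)) * Real.exp ε ^ n) := by
        rw [← Real.exp_nat_mul, ← Real.exp_add]
        gcongr
        exact hsqrt n
    _ = Real.exp (c ^ 2 / (4 * ε)) * (q * Real.exp ε) ^ n := by ring

/-- The radius `σ` at which `norm_heatTerm_le` is applied when `‖τ‖ ≤ r`: a shift of the
minimiser `√(n / r)` of `n! / σ ^ n * exp (r σ² / 2)` that stays positive at `n = 0`. -/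
def heatRadius (r : ℝ) (n : ℕ) : ℝ := √((n + 1) / r)

def heatMajorant (r ρ : ℝ) (n : ℕ) : ℝ :=
  n.factorial / heatRadius r n ^ n * Real.exp (ρ * heatRadius r n + r * heatRadius r n ^ 2 / 2)

section heatMajorant

variable {r ρ : ℝ}

theorem heatRadius_pos (hr : 0 < r) (n : ℕ) : 0 < heatRadius r n :=
  Real.sqrt_pos.2 (by positivity)

theorem heatRadius_sq (hr : 0 < r) (n : ℕ) : heatRadius r n ^ 2 = (n + 1) / r :=
  Real.sq_sqrt (by positivity)

theorem sqrt_mul_heatRadius (hr : 0 < r) (n : ℕ) : √r * heatRadius r n = √(n + 1) := by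
  rw [heatRadius, ← Real.sqrt_mul hr.le, mul_div_cancel₀ _ hr.ne']

theorem norm_mul_heatTerm_le_heatMajorant (hr : 0 < r) {τ z : ℂ} (hτ : ‖τ‖ ≤ r) (hz : ‖z‖ ≤ ρ)
    (a : ℂ) (n : ℕ) : ‖a * heatTerm τ z n‖ ≤ ‖a‖ * heatMajorant r ρ n := by
  have hσ := heatRadius_pos hr n
  rw [norm_mul]
  refine mul_le_mul_of_nonneg_left ((norm_heatTerm_le τ z n hσ).trans ?_) (norm_nonneg a)
  unfold heatMajorant
  gcongr

theorem norm_mul_factorial_div_heatRadius_pow_le (hr : 0 < r) {δ : ℝ} (hδ : 0 ≤ δ) {n : ℕ}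
    (hn : n ≠ 0) {x : ℝ} (hx : x ≤ (δ / √n) ^ n) :
    x * (n.factorial / heatRadius r n ^ n) ≤
      Real.exp 1 * √n * (δ * √r / Real.exp 1) ^ n := by
  have hσ := heatRadius_pos hr n
  have hbase : δ / √n * (n / Real.exp 1) / heatRadius r n ≤ δ * √r / Real.exp 1 :=
    calc δ / √n * (n / Real.exp 1) / heatRadius r n
        = δ * (n / √n) / (Real.exp 1 * heatRadius r n) := by ring
      _ = δ * √n / (Real.exp 1 * heatRadius r n) := by rw [Real.div_sqrt]
      _ ≤ δ * √(n + 1) / (Real.exp 1 * heatRadius r n) := by gcongr; linarith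
      _ = δ * √r / Real.exp 1 := by rw [← sqrt_mul_heatRadius hr]; field_simp
  calc x * (n.factorial / heatRadius r n ^ n)
      ≤ (δ / √n) ^ n * (Real.exp 1 * √n * (n / Real.exp 1) ^ n / heatRadius r n ^ n) := by
        gcongr
        exact factorial_le_exp_one_mul_sqrt_mul_pow hn
    _ = Real.exp 1 * √n * (δ / √n * (n / Real.exp 1) / heatRadius r n) ^ n := by
        simp only [div_pow, mul_pow]; ring
    _ ≤ Real.exp 1 * √n * (δ * √r / Real.exp 1) ^ n := by gcongr

theorem exp_heatRadius_le (hr : 0 < r) (hρ : 0 ≤ ρ) {n : ℕ} (hn : n ≠ 0) :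
    Real.exp (ρ * heatRadius r n + r * heatRadius r n ^ 2 / 2) ≤
      Real.exp (1 / 2) * Real.exp (1 / 2) ^ n * Real.exp (ρ * √(2 / r) * √n) := by
  have hσ : heatRadius r n ≤ √(2 / r) * √n := by
    rw [heatRadius, ← Real.sqrt_mul (by positivity)]
    gcongr
    rw [div_mul_eq_mul_div, div_le_div_iff_of_pos_right hr]
    have : (1 : ℝ) ≤ n := by exact_mod_cast Nat.one_le_iff_ne_zero.2 hn
    linarith
  rw [← Real.exp_nat_mul, ← Real.exp_add, ← Real.exp_add, heatRadius_sq hr,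
    mul_div_cancel₀ _ hr.ne']
  exact Real.exp_le_exp.2 (by linarith [mul_le_mul_of_nonneg_left hσ hρ])

theorem summable_norm_mul_heatMajorant (hr : 0 < r) (hρ : 0 ≤ ρ) {δ : ℝ} (hδ : 0 ≤ δ)
    (hrδ : r * δ ^ 2 < Real.exp 1) {a : ℕ → ℂ} (ha : ∀ᶠ n in atTop, ‖a n‖ ≤ (δ / √n) ^ n) :
    Summable fun n => ‖a n‖ * heatMajorant r ρ n := by
  have he : Real.exp 1 = Real.exp (1 / 2) ^ 2 := by rw [← Real.exp_nat_mul]; norm_num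
  have hδr : δ * √r < Real.exp (1 / 2) := by
    rw [← pow_lt_pow_iff_left₀ (by positivity) (by positivity) two_ne_zero, mul_pow,
      Real.sq_sqrt hr.le, ← he]
    linarith
  have hq : δ * √r / Real.exp 1 * Real.exp (1 / 2) < 1 := by
    rw [he]
    field_simp
    exact hδr
  set q := δ * √r / Real.exp 1 * Real.exp (1 / 2)
  set c := ρ * √(2 / r)
  refine (((summable_geometric_mul_exp_sqrt (by positivity) hq (c + 1)).mul_left
    (Real.exp 1 * Real.exp (1 / 2)))).of_norm_bounded_eventually_nat ?_
  filter_upwards [ha, eventually_ne_atTop 0] with n han hn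
  have hsqrt : √n * Real.exp (c * √n) ≤ Real.exp ((c + 1) * √n) := by
    rw [add_one_mul, Real.exp_add, mul_comm]
    exact mul_le_mul_of_nonneg_left (by linarith [Real.add_one_le_exp √(n : ℝ)]) (by positivity)
  rw [Real.norm_of_nonneg (by unfold heatMajorant heatRadius; positivity)]
  calc ‖a n‖ * heatMajorant r ρ n
      = ‖a n‖ * (n.factorial / heatRadius r n ^ n) *
          Real.exp (ρ * heatRadius r n + r * heatRadius r n ^ 2 / 2) := by
        rw [heatMajorant, mul_assoc]
    _ ≤ Real.exp 1 * √n * (δ * √r / Real.exp 1) ^ n *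
          (Real.exp (1 / 2) * Real.exp (1 / 2) ^ n * Real.exp (c * √n)) :=
        mul_le_mul (norm_mul_factorial_div_heatRadius_pow_le hr hδ hn han)
          (exp_heatRadius_le hr hρ hn) (by positivity) (by positivity)
    _ = Real.exp 1 * Real.exp (1 / 2) * (q ^ n * (√n * Real.exp (c * √n))) := by ring
    _ ≤ Real.exp 1 * Real.exp (1 / 2) * (q ^ n * Real.exp ((c + 1) * √n)) := by gcongr

end heatMajorant

section IteratedDeriv

variable {ι E : Type*} [NormedAddCommGroup E] [NormedSpace ℂ E] [CompleteSpace E]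
  {φ : Filter ι} {U : Set ℂ}

theorem TendstoLocallyUniformlyOn.iteratedDeriv {F : ι → ℂ → E} {f : ℂ → E}
    (hf : TendstoLocallyUniformlyOn F f φ U) (hF : ∀ᶠ n in φ, DifferentiableOn ℂ (F n) U)
    (hU : IsOpen U) (k : ℕ) :
    TendstoLocallyUniformlyOn (fun n => iteratedDeriv k (F n)) (iteratedDeriv k f) φ U := by
  induction k generalizing F f with
  | zero => simpa using hf
  | succ k ih =>
    simp only [iteratedDeriv_succ']
    exact ih (hf.deriv hF hU) (hF.mono fun n hn => hn.deriv hU)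

theorem hasSum_iteratedDeriv_of_summable_norm {F : ι → ℂ → E} {u : ι → ℝ} (hu : Summable u)
    (hf : ∀ i, DifferentiableOn ℂ (F i) U) (hU : IsOpen U)
    (hF_le : ∀ i, ∀ w ∈ U, ‖F i w‖ ≤ u i) {z : ℂ} (hz : z ∈ U) (k : ℕ) :
    HasSum (fun i => iteratedDeriv k (F i) z) (iteratedDeriv k (fun w => ∑' i, F i w) z) := by
  have hlim := ((tendstoUniformlyOn_tsum hu hF_le).tendstoLocallyUniformlyOn.iteratedDeriv
    (Eventually.of_forall fun s => DifferentiableOn.fun_sum fun i _ => hf i) hU k).tendsto_at hz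
  refine hlim.congr fun s => iteratedDeriv_fun_sum fun i _ => ?_
  exact ((hf i).contDiffOn hU).contDiffAt (hU.mem_nhds hz)

end IteratedDeriv

theorem Lgrowth_nonneg {F : ℂ → ℂ}
    (hL : Filter.IsBoundedUnder (· ≤ ·) Filter.atTop (coefGrowthSeq F)) : 0 ≤ Lgrowth F :=
  le_limsup_of_frequently_le (Frequently.of_forall fun _ => by unfold coefGrowthSeq; positivity) hL

theorem norm_taylorCoeff_le_of_coefGrowthSeq_le {F : ℂ → ℂ} {n : ℕ} (hn : n ≠ 0) {δ : ℝ}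
    (h : coefGrowthSeq F n ≤ δ) : ‖taylorCoeff F n‖ ≤ (δ / √n) ^ n := by
  have hsqrt : 0 < √(n : ℝ) := Real.sqrt_pos.2 (by positivity)
  calc ‖taylorCoeff F n‖ = (‖taylorCoeff F n‖ ^ (n : ℝ)⁻¹) ^ n := by
        rw [← Real.rpow_natCast, ← Real.rpow_mul (norm_nonneg _), inv_mul_cancel₀ (by simpa),
          Real.rpow_one]
    _ ≤ (δ / √n) ^ n := by
        gcongr
        rw [le_div_iff₀ hsqrt, mul_comm]
        exact h

theorem eventually_norm_taylorCoeff_le {F : ℂ → ℂ}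
    (hL : Filter.IsBoundedUnder (· ≤ ·) Filter.atTop (coefGrowthSeq F)) {δ : ℝ}
    (hδ : Lgrowth F < δ) : ∀ᶠ n in atTop, ‖taylorCoeff F n‖ ≤ (δ / √n) ^ n := by
  filter_upwards [eventually_lt_of_limsup_lt hδ hL, eventually_ne_atTop 0] with n hn hn₀
  exact norm_taylorCoeff_le_of_coefGrowthSeq_le hn₀ hn.le

theorem summable_norm_taylorCoeff_mul_heatMajorant {F : ℂ → ℂ}
    (hL : Filter.IsBoundedUnder (· ≤ ·) Filter.atTop (coefGrowthSeq F)) {r ρ : ℝ} (hr : 0 < r)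
    (hrL : r * Lgrowth F ^ 2 < Real.exp 1) (hρ : 0 ≤ ρ) :
    Summable fun n => ‖taylorCoeff F n‖ * heatMajorant r ρ n := by
  obtain ⟨δ, hLδ, hrδ⟩ :=
    ((show ContinuousAt (fun δ => r * δ ^ 2) (Lgrowth F) by fun_prop).eventually_lt_const
      hrL).exists_gt
  exact summable_norm_mul_heatMajorant hr hρ (by linarith [Lgrowth_nonneg hL]) hrδ
    (eventually_norm_taylorCoeff_le hL hLδ)

theorem heat_flow_solves_backward_heat_equation_general (F : ℂ → ℂ)
    (hL : Filter.IsBoundedUnder (· ≤ ·) Filter.atTop (coefGrowthSeq F)) :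
    ∀ τ z : ℂ, ‖τ‖ * Lgrowth F ^ 2 < Real.exp 1 →
      HasDerivAt (fun s => heatFlow F s z)
        (-(1 / 2) * iteratedDeriv 2 (fun w => heatFlow F τ w) z) τ := by
  intro τ z hτ
  obtain ⟨r, hτr, hrL⟩ :=
    ((show ContinuousAt (· * Lgrowth F ^ 2) ‖τ‖ by fun_prop).eventually_lt_const hτ).exists_gt
  have hr : 0 < r := (norm_nonneg τ).trans_lt hτr
  have hmaj (ρ : ℝ) (hρ : 0 ≤ ρ) := summable_norm_taylorCoeff_mul_heatMajorant hL hr hrL hρ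
  have hτ_mem : τ ∈ ball (0 : ℂ) r := mem_ball_zero_iff.2 hτr
  have htime_diff n : DifferentiableOn ℂ (fun s => taylorCoeff F n * heatTerm s z n) (ball 0 r) :=
    ((differentiable_heatTerm_time z n).const_mul _).differentiableOn
  have htime_le n s (hs : s ∈ ball (0 : ℂ) r) :=
    norm_mul_heatTerm_le_heatMajorant hr (mem_ball_zero_iff.1 hs).le (le_refl ‖z‖)
      (taylorCoeff F n) n
  have hdiff := Complex.differentiableOn_tsum_of_summable_norm (hmaj _ (norm_nonneg z))
    htime_diff isOpen_ball htime_le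
  have htime := Complex.hasSum_deriv_of_summable_norm (hmaj _ (norm_nonneg z)) htime_diff
    isOpen_ball htime_le hτ_mem
  have hspace := hasSum_iteratedDeriv_of_summable_norm (hmaj (‖z‖ + 1) (by positivity))
    (fun n => ((differentiable_heatTerm_space τ n).const_mul _).differentiableOn) isOpen_ball
    (fun n w hw => norm_mul_heatTerm_le_heatMajorant hr hτr.le (mem_ball_zero_iff.1 hw).le _ n)
    (by simp : z ∈ ball 0 (‖z‖ + 1)) 2
  have hequation : deriv (fun s => heatFlow F s z) τ =
      -(1 / 2) * iteratedDeriv 2 (fun w => heatFlow F τ w) z :=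
    htime.unique <| by
      simp only [deriv_const_mul_field', deriv_heatTerm_time, mul_left_comm (taylorCoeff F _)]
      have := hspace.mul_left (-(1 / 2))
      simp only [iteratedDeriv_const_mul_field] at this
      exact this
  exact hequation ▸ (hdiff.differentiableAt (isOpen_ball.mem_nhds hτ_mem)).hasDerivAt

/-- `F(z;τ) = (e^{-τD²/2}F)(z)` solves the backward heat equation
`∂F(z;τ)/∂τ = -(1/2) ∂²F(z;τ)/∂z²` on the domain `|τ| L² < e`. -/
theorem heat_flow_solves_backward_heat_equation (F : ℂ → ℂ) (hF : Differentiable ℂ F)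
    (hL : Filter.IsBoundedUnder (· ≤ ·) Filter.atTop (coefGrowthSeq F)) :
    ∀ τ z : ℂ, ‖τ‖ * Lgrowth F ^ 2 < Real.exp 1 →
      HasDerivAt (fun s => heatFlow F s z)
        (-(1 / 2) * iteratedDeriv 2 (fun w => heatFlow F τ w) z) τ :=
  heat_flow_solves_backward_heat_equation_general F hL
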